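/- Let A be a bisectorial operator of angle ω on a reflexive Banach space X. Then ker(A²) = ker A and the closure of Ran(A²) equals the closure of Ran A. -/

import Mathlib

/-!
Let `z → 0` outside the bisector (possible, as the imaginary axis avoids it). The vectors
`z (z R(z) x - x)` have norm at most `|z| (C + 1) ‖x‖` and so tend to `0`. For `x ∈ dom A`
they equal `A x - A² (-R(z) x)`, which puts `A x` in the closure of `Ran A²`; and if moreover
`A² x = 0`, they equal `A x` itself, so `A x = 0`.
-/

open Complex Filter Topology

def closedBisector (ω : ℝ) : Set ℂ := {z : ℂ | z = 0 ∨ |arg z| ≤ ω ∨ |arg (-z)| ≤ ω}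

lemma ofReal_mul_I_notMem_closedBisector {ω t : ℝ} (hω : ω < Real.pi / 2) (ht : 0 < t) :
    (t : ℂ) * I ∉ closedBisector ω := by
  have hpi : 0 < Real.pi / 2 := by positivity
  rintro (h | h | h)
  · simp [ht.ne'] at h
  · rw [arg_real_mul _ ht, arg_I, abs_of_pos hpi] at h
    linarith
  · rw [show -((t : ℂ) * I) = t * -I by ring, arg_real_mul _ ht, arg_neg_I, abs_neg,
      abs_of_pos hpi] at h
    linarith

lemma zero_mem_closure_compl_closedBisector {ω : ℝ} (hω : ω < Real.pi / 2) :
    (0 : ℂ) ∈ closure (closedBisector ω)ᶜ := by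
  have h : Tendsto (fun t : ℝ => (t : ℂ) * I) (𝓝[>] 0) (𝓝 0) :=
    ((by fun_prop : Continuous fun t : ℝ => (t : ℂ) * I).tendsto' 0 0 (by simp)).mono_left
      nhdsWithin_le_nhds
  exact mem_closure_of_tendsto h
    (eventually_nhdsWithin_of_forall fun _ ht => ofReal_mul_I_notMem_closedBisector hω ht)

section Resolvent

variable {𝕜 X : Type*} [Ring 𝕜] [AddCommGroup X] [Module 𝕜 X] {dom : Submodule 𝕜 X}
  {A : dom →ₗ[𝕜] X} {R : X →ₗ[𝕜] X} {z : 𝕜}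

lemma resolvent_apply_eq (hleft : ∀ x : dom, R (z • (x : X) - A x) = x) (x : dom) :
    R (A x) = z • R x - x := by
  have h := hleft x
  rw [map_sub, map_smul, sub_eq_iff_eq_add] at h
  rw [h]
  abel

lemma apply_resolvent_eq (hdom : ∀ y, R y ∈ dom)
    (hright : ∀ y, z • R y - A ⟨R y, hdom y⟩ = y) (y : X) :
    A ⟨R y, hdom y⟩ = z • R y - y := by
  rw [sub_eq_iff_eq_add.mp (hright y)]
  abel

lemma apply_eq_of_apply_apply_eq_zero (hleft : ∀ x : dom, R (z • (x : X) - A x) = x)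
    (x : dom) (hAx : A x ∈ dom) (hAAx : A ⟨A x, hAx⟩ = 0) :
    A x = z • (z • R x - x) := by
  have h := hleft ⟨A x, hAx⟩
  rw [hAAx, sub_zero, map_smul, resolvent_apply_eq hleft] at h
  exact h.symm

lemma exists_apply_apply_eq_apply_sub (hdom : ∀ y, R y ∈ dom)
    (hright : ∀ y, z • R y - A ⟨R y, hdom y⟩ = y) (x : dom) :
    ∃ u : X, ∃ hu : u ∈ dom, ∃ hAu : A ⟨u, hu⟩ ∈ dom,
      A ⟨A ⟨u, hu⟩, hAu⟩ = A x - z • (z • R x - x) := by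
  have hAu : A ⟨-R x, dom.neg_mem (hdom x)⟩ = (x : X) - z • R x := by
    change A (-⟨R x, hdom x⟩) = _
    rw [map_neg, apply_resolvent_eq hdom hright]
    abel
  have hmem : (x : X) - z • R x ∈ dom := dom.sub_mem x.2 (dom.smul_mem z (hdom x))
  refine ⟨-R x, dom.neg_mem (hdom x), hAu ▸ hmem, ?_⟩
  have hsplit : (⟨_, hAu ▸ hmem⟩ : dom) = x - z • ⟨R x, hdom x⟩ := Subtype.ext hAu
  rw [hsplit, map_sub, map_smul, apply_resolvent_eq hdom hright]

end Resolvent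

section Estimate

variable {𝕜 X : Type*} [NontriviallyNormedField 𝕜] [NormedAddCommGroup X] [NormedSpace 𝕜 X]

lemma norm_smul_smul_apply_sub_le {R : X →L[𝕜] X} {z : 𝕜} {C : ℝ} (hRC : ‖z‖ * ‖R‖ ≤ C)
    (x : X) : ‖z • (z • R x - x)‖ ≤ ‖z‖ * ((C + 1) * ‖x‖) := by
  have hzR : ‖z • R x‖ ≤ C * ‖x‖ := by
    calc ‖z • R x‖ ≤ ‖z‖ * (‖R‖ * ‖x‖) := by
          rw [norm_smul]; gcongr; exact R.le_opNorm x
      _ ≤ C * ‖x‖ := by rw [← mul_assoc]; gcongr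
  rw [norm_smul]
  gcongr
  calc ‖z • R x - x‖ ≤ ‖z • R x‖ + ‖x‖ := norm_sub_le _ _
    _ ≤ (C + 1) * ‖x‖ := by linarith

lemma tendsto_smul_smul_apply_sub_zero {l : Filter 𝕜} (hl : l ≤ 𝓝 0) {R : 𝕜 → X →L[𝕜] X}
    {C : ℝ} (hRC : ∀ᶠ z in l, ‖z‖ * ‖R z‖ ≤ C) (x : X) :
    Tendsto (fun z => z • (z • R z x - x)) l (𝓝 0) := by
  refine squeeze_zero_norm' (hRC.mono fun z hz => norm_smul_smul_apply_sub_le hz x) ?_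
  simpa using ((tendsto_norm_zero.mono_left hl).mul_const ((C + 1) * ‖x‖))

end Estimate

theorem stmt15_general {X : Type*} [NormedAddCommGroup X] [NormedSpace ℂ X]
    (dom : Submodule ℂ X)
    (A : dom →ₗ[ℂ] X)
    -- the closed bisector of angle ω
    (ω : ℝ) (hω : ω ∈ Set.Ioo 0 (Real.pi / 2))
    (bisect : Set ℂ)
    (hbisect : bisect = {z : ℂ | z = 0 ∨ |Complex.arg z| ≤ ω ∨ |Complex.arg (-z)| ≤ ω})
    -- the spectrum of A lies in the closed bisector: every `z` outside it is in the
    -- resolvent set, with resolvent operator `R z = (z − A)⁻¹`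
    (R : ℂ → X →L[ℂ] X) (C : ℝ)
    (hdomR : ∀ z : ℂ, z ∉ bisect → ∀ y : X, R z y ∈ dom)
    (hR_right : ∀ (z : ℂ) (hz : z ∉ bisect) (y : X),
      z • R z y - A ⟨R z y, hdomR z hz y⟩ = y)
    (hR_left : ∀ z : ℂ, z ∉ bisect → ∀ x : dom, R z (z • (x : X) - A x) = x)
    -- uniform bound `‖z R(z,A)‖ ≤ C` outside the bisector
    (hbound : ∀ z : ℂ, z ∉ bisect → ‖z‖ * ‖R z‖ ≤ C) :
    -- ker A² = ker A
    {x : X | ∃ h : x ∈ dom, ∃ h2 : A ⟨x, h⟩ ∈ dom, A ⟨A ⟨x, h⟩, h2⟩ = 0}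
      = {x : X | ∃ h : x ∈ dom, A ⟨x, h⟩ = 0} ∧
    -- closure (Ran A²) = closure (Ran A)
    closure {y : X | ∃ x : X, ∃ h : x ∈ dom, ∃ h2 : A ⟨x, h⟩ ∈ dom, A ⟨A ⟨x, h⟩, h2⟩ = y}
      = closure {y : X | ∃ x : X, ∃ h : x ∈ dom, A ⟨x, h⟩ = y} := by
  change bisect = closedBisector ω at hbisect
  subst hbisect
  have : (𝓝[(closedBisector ω)ᶜ] (0 : ℂ)).NeBot :=
    mem_closure_iff_nhdsWithin_neBot.mp (zero_mem_closure_compl_closedBisector hω.2)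
  have htend := tendsto_smul_smul_apply_sub_zero nhdsWithin_le_nhds
    (eventually_nhdsWithin_of_forall (s := (closedBisector ω)ᶜ) (a := 0) hbound)
  refine ⟨Set.ext fun x => ⟨?_, ?_⟩, subset_antisymm ?_ ?_⟩
  · rintro ⟨hx, hAx, hAAx⟩
    refine ⟨hx, tendsto_nhds_unique (tendsto_const_nhds.congr' ?_) (htend x)⟩
    filter_upwards [self_mem_nhdsWithin] with z hz
    exact apply_eq_of_apply_apply_eq_zero (hR_left z hz) ⟨x, hx⟩ hAx hAAx
  · rintro ⟨hx, hAx⟩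
    exact ⟨hx, hAx ▸ dom.zero_mem, by simp only [hAx]; exact map_zero A⟩
  · exact closure_mono fun y ⟨x, hx, hAx, hy⟩ => ⟨_, hAx, hy⟩
  · refine closure_minimal ?_ isClosed_closure
    rintro _ ⟨x, hx, rfl⟩
    refine mem_closure_of_tendsto (by simpa using tendsto_const_nhds.sub (htend x)) ?_
    filter_upwards [self_mem_nhdsWithin] with z hz
    exact exists_apply_apply_eq_apply_sub (hdomR z hz) (hR_right z hz) ⟨x, hx⟩

/-- Let `A` be a bisectorial operator of angle `ω ∈ (0, π/2)` on a reflexive complex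
Banach space `X` (a closed, densely defined operator whose spectrum lies in the closed
bisector `Σ̄^bi_ω` and whose resolvent satisfies `‖z R(z,A)‖ ≤ C` outside `Σ̄^bi_ω`,
encoded here by the family `R` of resolvent operators).  Then `ker A² = ker A` and
`closure (Ran A²) = closure (Ran A)`. -/
theorem stmt15 {X : Type*} [NormedAddCommGroup X] [NormedSpace ℂ X] [CompleteSpace X]
    -- X is reflexive
    (hrefl : Function.Surjective (NormedSpace.inclusionInDoubleDual ℂ X))
    -- A is a densely defined closed operator with domain `dom`
    (dom : Submodule ℂ X) (hdense : Dense (dom : Set X))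
    (A : dom →ₗ[ℂ] X)
    (hclosed : IsClosed {q : X × X | ∃ h : q.1 ∈ dom, A ⟨q.1, h⟩ = q.2})
    -- the closed bisector of angle ω
    (ω : ℝ) (hω : ω ∈ Set.Ioo 0 (Real.pi / 2))
    (bisect : Set ℂ)
    (hbisect : bisect = {z : ℂ | z = 0 ∨ |Complex.arg z| ≤ ω ∨ |Complex.arg (-z)| ≤ ω})
    -- the spectrum of A lies in the closed bisector: every `z` outside it is in the
    -- resolvent set, with resolvent operator `R z = (z − A)⁻¹`
    (R : ℂ → X →L[ℂ] X) (C : ℝ)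
    (hdomR : ∀ z : ℂ, z ∉ bisect → ∀ y : X, R z y ∈ dom)
    (hR_right : ∀ (z : ℂ) (hz : z ∉ bisect) (y : X),
      z • R z y - A ⟨R z y, hdomR z hz y⟩ = y)
    (hR_left : ∀ z : ℂ, z ∉ bisect → ∀ x : dom, R z (z • (x : X) - A x) = x)
    -- uniform bound `‖z R(z,A)‖ ≤ C` outside the bisector
    (hbound : ∀ z : ℂ, z ∉ bisect → ‖z‖ * ‖R z‖ ≤ C) :
    -- ker A² = ker A
    {x : X | ∃ h : x ∈ dom, ∃ h2 : A ⟨x, h⟩ ∈ dom, A ⟨A ⟨x, h⟩, h2⟩ = 0}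
      = {x : X | ∃ h : x ∈ dom, A ⟨x, h⟩ = 0} ∧
    -- closure (Ran A²) = closure (Ran A)
    closure {y : X | ∃ x : X, ∃ h : x ∈ dom, ∃ h2 : A ⟨x, h⟩ ∈ dom, A ⟨A ⟨x, h⟩, h2⟩ = y}
      = closure {y : X | ∃ x : X, ∃ h : x ∈ dom, A ⟨x, h⟩ = y} :=
  stmt15_general dom A ω hω bisect hbisect R C hdomR hR_right hR_left hbound
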